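/- arXiv:0809.3815 — 2 statements merged into one kernel-verified Lean document; each statement's English description precedes it below -/
import Mathlib

section
/- Let A be an algebra, a,b,c,d ∈ A and θ, θ* congruences of A such that (c,a) ∈ θ, (a,b) ∈ θ* and (b,d) ∈ θ. Suppose a₁,…,aₙ,b₁,…,bₙ ∈ A are such that for every 0 ≤ j ≤ n−1: (s_{j+1}(a,b,c,d,a₁,b₁,…,a_j,b_j), a_{j+1}) ∈ θ and (a_{j+1}, t_{j+1}(a,b,c,d,a₁,b₁,…,a_j,b_j)) ∈ θ*. Then for every L-term t of arity 2n+4, with X⃗ = (a,b,c,d,a₁,b₁,…,aₙ,bₙ): (t(σ(X⃗)), t(X⃗)) ∈ θ and (t(X⃗), t(σ*(X⃗))) ∈ θ*. -/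
set_option linter.unusedVariables false

namespace UA

/-- A purely functional first-order signature (language). -/
structure Sig where
  ops : Type
  ar : ops → ℕ

/-- An algebra over a signature: a carrier together with interpretations of
the basic operations. -/
structure Alg (S : Sig) where
  carrier : Type
  interp : ∀ f : S.ops, (Fin (S.ar f) → carrier) → carrier

/-- Terms over a signature, with variables in `V`. -/
inductive Tm (S : Sig) (V : Type) : Type
  | var : V → Tm S V
  | app : ∀ f : S.ops, (Fin (S.ar f) → Tm S V) → Tm S V

/-- Evaluation of a term in an algebra, under an assignment of the variables. -/
def Tm.eval {S : Sig} {V : Type} (A : Alg S) (v : V → A.carrier) : Tm S V → A.carrier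
  | .var i => v i
  | .app f ts => A.interp f (fun i => Tm.eval A v (ts i))

/-- An algebra satisfies an identity (a universally quantified equation between
two terms in variables `ℕ`). -/
def Alg.satisfies {S : Sig} (A : Alg S) (e : Tm S ℕ × Tm S ℕ) : Prop :=
  ∀ v : ℕ → A.carrier, Tm.eval A v e.1 = Tm.eval A v e.2

/-- Membership in the variety axiomatized by the set of equations `E`. -/
def InV {S : Sig} (E : Set (Tm S ℕ × Tm S ℕ)) (A : Alg S) : Prop :=
  ∀ e ∈ E, A.satisfies e

/-- A congruence of an algebra: an equivalence relation compatible with all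
basic operations. -/
structure Con {S : Sig} (A : Alg S) where
  rel : A.carrier → A.carrier → Prop
  refl : ∀ a, rel a a
  symm : ∀ a b, rel a b → rel b a
  trans : ∀ a b c, rel a b → rel b c → rel a c
  compat : ∀ (f : S.ops) (ts us : Fin (S.ar f) → A.carrier),
      (∀ i, rel (ts i) (us i)) → rel (A.interp f ts) (A.interp f us)

/-- The trivial (equality) congruence Δ. -/
def conDelta {S : Sig} (A : Alg S) : Con A where
  rel a b := a = b
  refl _ := rfl
  symm _ _ h := h.symm
  trans _ _ _ h₁ h₂ := h₁.trans h₂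
  compat f ts us h := congrArg (A.interp f) (funext h)

/-- The total congruence ∇. -/
def conNabla {S : Sig} (A : Alg S) : Con A where
  rel _ _ := True
  refl _ := trivial
  symm _ _ _ := trivial
  trans _ _ _ _ _ := trivial
  compat _ _ _ _ := trivial

/-- The congruence generated by a set of pairs. -/
def cg {S : Sig} {A : Alg S} (s : Set (A.carrier × A.carrier)) : Con A where
  rel a b := ∀ θ : Con A, (∀ p ∈ s, θ.rel p.1 p.2) → θ.rel a b
  refl a := fun θ _ => θ.refl a
  symm _ _ h := fun θ hs => θ.symm _ _ (h θ hs)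
  trans _ _ _ h₁ h₂ := fun θ hs => θ.trans _ _ _ (h₁ θ hs) (h₂ θ hs)
  compat f ts us h := fun θ hs => θ.compat f ts us (fun i => h i θ hs)

/-- The principal congruence generated by a pair. -/
def cgPair {S : Sig} (A : Alg S) (a b : A.carrier) : Con A := cg {(a, b)}

/-- Meet (intersection) in the congruence lattice. -/
def Con.inf {S : Sig} {A : Alg S} (θ φ : Con A) : Con A where
  rel a b := θ.rel a b ∧ φ.rel a b
  refl a := ⟨θ.refl a, φ.refl a⟩
  symm _ _ h := ⟨θ.symm _ _ h.1, φ.symm _ _ h.2⟩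
  trans _ _ _ h₁ h₂ := ⟨θ.trans _ _ _ h₁.1 h₂.1, φ.trans _ _ _ h₁.2 h₂.2⟩
  compat f ts us h :=
    ⟨θ.compat f ts us fun i => (h i).1, φ.compat f ts us fun i => (h i).2⟩

/-- Join in the congruence lattice. -/
def Con.sup {S : Sig} {A : Alg S} (θ φ : Con A) : Con A :=
  cg {p | θ.rel p.1 p.2 ∨ φ.rel p.1 p.2}

/-- Join of a family in the congruence lattice. -/
def Con.iSup {S : Sig} {A : Alg S} {ι : Type} (f : ι → Con A) : Con A :=
  cg {p | ∃ i, (f i).rel p.1 p.2}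

/-- Inclusion of congruences. -/
def conLE {S : Sig} {A : Alg S} (θ φ : Con A) : Prop := ∀ a b, θ.rel a b → φ.rel a b

/-- Relational composition `r ∘ s`. -/
def relComp {α : Type} (r s : α → α → Prop) : α → α → Prop :=
  fun a b => ∃ c, r a c ∧ s c b

/-- `θ` and `θs` are complementary factor congruences: θ ∩ θ* = Δ and θ ∘ θ* = ∇. -/
def AreCompFC {S : Sig} {A : Alg S} (θ θs : Con A) : Prop :=
  (∀ a b, θ.rel a b → θs.rel a b → a = b) ∧ (∀ a b, relComp θ.rel θs.rel a b)

/-- The set of factor congruences of an algebra. -/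
def FC {S : Sig} (A : Alg S) : Set (Con A) := {θ | ∃ θs, AreCompFC θ θs}

/-- `FC(A)` is a distributive sublattice of `Con(A)`. -/
def HasBFC {S : Sig} (A : Alg S) : Prop :=
  (∀ θ φ, θ ∈ FC A → φ ∈ FC A → θ.inf φ ∈ FC A) ∧
  (∀ θ φ, θ ∈ FC A → φ ∈ FC A → θ.sup φ ∈ FC A) ∧
  (∀ θ φ ψ, θ ∈ FC A → φ ∈ FC A → ψ ∈ FC A →
    θ.inf (φ.sup ψ) = (θ.inf φ).sup (θ.inf ψ))

/-- The variety axiomatized by `E` has Boolean factor congruences. -/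
def BFC {S : Sig} (E : Set (Tm S ℕ × Tm S ℕ)) : Prop :=
  ∀ A : Alg S, InV E A → HasBFC A

/-- Direct product of two algebras. -/
def Alg.prod {S : Sig} (A B : Alg S) : Alg S where
  carrier := A.carrier × B.carrier
  interp f xs := (A.interp f (fun i => (xs i).1), B.interp f (fun i => (xs i).2))

/-- Direct product of a family of algebras. -/
def Alg.pi {S : Sig} {ι : Type} (A : ι → Alg S) : Alg S where
  carrier := ∀ i, (A i).carrier
  interp f xs i := (A i).interp f (fun j => (xs j) i)

/-- First-order formulas over a purely functional signature, with `k` free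
variables (de Bruijn style: `all` binds a new last variable).  Negation,
conjunction, disjunction and existential quantification are definable from
`falsum`, `imp` and `all`, so this captures full first-order logic. -/
inductive Fml (S : Sig) : ℕ → Type
  | eq {k : ℕ} : Tm S (Fin k) → Tm S (Fin k) → Fml S k
  | falsum {k : ℕ} : Fml S k
  | imp {k : ℕ} : Fml S k → Fml S k → Fml S k
  | all {k : ℕ} : Fml S (k + 1) → Fml S k

/-- Tarskian satisfaction of a first-order formula in an algebra. -/
def Fml.realize {S : Sig} (A : Alg S) : ∀ {k : ℕ}, Fml S k → (Fin k → A.carrier) → Prop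
  | _, .eq t u, v => Tm.eval A v t = Tm.eval A v u
  | _, .falsum, _ => False
  | _, .imp f g, v => Fml.realize A f v → Fml.realize A g v
  | _, .all f, v => ∀ a : A.carrier, Fml.realize A f (Fin.snoc v a)

/-- A formula is preserved by direct products. -/
def PreservedByProducts {S : Sig} {l : ℕ} (φ : Fml S l) : Prop :=
  ∀ (ι : Type) (A : ι → Alg S) (v : Fin l → (Alg.pi A).carrier),
    (∀ i, φ.realize (A i) (fun m => v m i)) → φ.realize (Alg.pi A) v

/-- A formula is preserved by direct factors. -/
def PreservedByFactors {S : Sig} {l : ℕ} (φ : Fml S l) : Prop :=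
  ∀ (A B : Alg S) (v : Fin l → (A.prod B).carrier),
    φ.realize (A.prod B) v →
      φ.realize A (fun m => (v m).1) ∧ φ.realize B (fun m => (v m).2)

/-! ### Tuples `(x, y, z, w, x₁, y₁, …, xₙ, yₙ)` and the maps σ, σ*, ρ, ρ* -/

/-- The tuple `(x, y, z, w, x₁, y₁, x₂, y₂, …)` as an assignment of variables:
variable `0 ↦ x`, `1 ↦ y`, `2 ↦ z`, `3 ↦ w`, `4 + 2m ↦ xs m`, `5 + 2m ↦ ys m`. -/
def tup {α : Type} (x y z w : α) (xs ys : ℕ → α) : ℕ → α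
  | 0 => x
  | 1 => y
  | 2 => z
  | 3 => w
  | m + 4 => if m % 2 = 0 then xs (m / 2) else ys (m / 2)

/-- Extend a tuple `Fin n → α` to all of `ℕ` by a default value. -/
def extN {α : Type} {n : ℕ} (dflt : α) (f : Fin n → α) : ℕ → α :=
  fun m => if h : m < n then f ⟨m, h⟩ else dflt

/-- Evaluate a term of arity `m` at (the first `m` entries of) a tuple. -/
def evalAt {S : Sig} (A : Alg S) {m : ℕ} (u : Tm S (Fin m)) (X : ℕ → A.carrier) :
    A.carrier :=
  Tm.eval A (fun i => X i.val) u

/-- The set of pairs of corresponding components of two tuples of length `len`;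
`Cg(X⃗, Y⃗)` is `cg (tupPairs X Y len)`. -/
def tupPairs {α : Type} (X Y : ℕ → α) (len : ℕ) : Set (α × α) :=
  {p | ∃ m, m < len ∧ p = (X m, Y m)}

/-- The recursively computed `x`-row: `row j = (u j)(h1,h2,h3,h4,row 0,ys 0,…,
row (j-1), ys (j-1))`.  `recRowX A u h1 h2 h3 h4 ys j m` is the value of the row
at index `m`, computed after `j` recursion steps (only the values at `m < j`
are meaningful; later steps never change them). -/
def recRowX {S : Sig} (A : Alg S) {n : ℕ} (u : ∀ j : Fin n, Tm S (Fin (4 + 2 * j.val)))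
    (h1 h2 h3 h4 : A.carrier) (ys : ℕ → A.carrier) : ℕ → ℕ → A.carrier
  | 0, _ => h1
  | j + 1, m =>
    if m = j then
      if h : j < n then
        Tm.eval A (fun i => tup h1 h2 h3 h4 (recRowX A u h1 h2 h3 h4 ys j) ys i.val)
          (u ⟨j, h⟩)
      else h1
    else recRowX A u h1 h2 h3 h4 ys j m

/-- The recursively computed `y`-row (the `x`-row being fixed). -/
def recRowY {S : Sig} (A : Alg S) {n : ℕ} (u : ∀ j : Fin n, Tm S (Fin (4 + 2 * j.val)))
    (h1 h2 h3 h4 : A.carrier) (xs : ℕ → A.carrier) : ℕ → ℕ → A.carrier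
  | 0, _ => h1
  | j + 1, m =>
    if m = j then
      if h : j < n then
        Tm.eval A (fun i => tup h1 h2 h3 h4 xs (recRowY A u h1 h2 h3 h4 xs j) i.val)
          (u ⟨j, h⟩)
      else h1
    else recRowY A u h1 h2 h3 h4 xs j m

/-- The tuple `σ(X⃗)`: heads `(x, y, x, y)`, `y`-row unchanged, `x`-row computed
recursively by the terms `s`. -/
def sigmaT {S : Sig} (A : Alg S) {n : ℕ} (s : ∀ j : Fin n, Tm S (Fin (4 + 2 * j.val)))
    (x y z w : A.carrier) (xs ys : ℕ → A.carrier) : ℕ → A.carrier :=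
  tup x y x y (recRowX A s x y x y ys n) ys

/-- The tuple `σ*(X⃗)`: heads `(x, x, z, w)`, `y`-row unchanged, `x`-row computed
recursively by the terms `t`. -/
def sigmaStarT {S : Sig} (A : Alg S) {n : ℕ} (t : ∀ j : Fin n, Tm S (Fin (4 + 2 * j.val)))
    (x y z w : A.carrier) (xs ys : ℕ → A.carrier) : ℕ → A.carrier :=
  tup x x z w (recRowX A t x x z w ys n) ys

/-- The tuple `ρ(X⃗)`: heads `(x, y, z, z)`, `x`-row unchanged, `y`-row computed
recursively by the terms `s`. -/
def rhoT {S : Sig} (A : Alg S) {n : ℕ} (s : ∀ j : Fin n, Tm S (Fin (4 + 2 * j.val)))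
    (x y z w : A.carrier) (xs ys : ℕ → A.carrier) : ℕ → A.carrier :=
  tup x y z z xs (recRowY A s x y z z xs n)

/-- The tuple `ρ*(X⃗)`: heads `(x, y, z, w)`, `x`-row unchanged, `y`-row computed
recursively by the terms `t`. -/
def rhoStarT {S : Sig} (A : Alg S) {n : ℕ} (t : ∀ j : Fin n, Tm S (Fin (4 + 2 * j.val)))
    (x y z w : A.carrier) (xs ys : ℕ → A.carrier) : ℕ → A.carrier :=
  tup x y z w xs (recRowY A t x y z w xs n)

/-- The pair of relations `(δ_m, ε_m)` determined by congruences θ, θ*, φ, φ*: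
`δ₀ = ε₀ = Δ`, `δ_{m+1} = (θ ∘ ε_m) ∩ (θ* ∘ ε_m)`,
`ε_{m+1} = (φ ∘ δ_m) ∩ (φ* ∘ δ_m)`. -/
def deltaEps {S : Sig} {A : Alg S} (θ θs φ φs : Con A) :
    ℕ → (A.carrier → A.carrier → Prop) × (A.carrier → A.carrier → Prop)
  | 0 => (Eq, Eq)
  | m + 1 =>
    let p := deltaEps θ θs φ φs m
    (fun a b => relComp θ.rel p.2 a b ∧ relComp θs.rel p.2 a b,
     fun a b => relComp φ.rel p.1 a b ∧ relComp φs.rel p.1 a b)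

/-- Willard's congruence-theoretic condition (Corollary on Willard terms): for
every algebra in the variety, all congruences θ, θ*, φ, φ* and every tuple, if
`Cg(X⃗,σ(X⃗)) ⊆ θ`, `Cg(X⃗,σ*(X⃗)) ⊆ θ*`, `Cg(X⃗,ρ(X⃗)) ⊆ φ` and
`Cg(X⃗,ρ*(X⃗)) ⊆ φ*` then `(x, y) ∈ φ ∘ δ_N`. -/
def MalcevRelCondition {S : Sig} (E : Set (Tm S ℕ × Tm S ℕ)) (N n : ℕ)
    (s t : ∀ j : Fin n, Tm S (Fin (4 + 2 * j.val))) : Prop :=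
  ∀ A : Alg S, InV E A → ∀ θ θs φ φs : Con A,
    ∀ x y z w : A.carrier, ∀ xs ys : Fin n → A.carrier,
      conLE (cg (tupPairs (tup x y z w (extN x xs) (extN x ys))
        (sigmaT A s x y z w (extN x xs) (extN x ys)) (4 + 2 * n))) θ →
      conLE (cg (tupPairs (tup x y z w (extN x xs) (extN x ys))
        (sigmaStarT A t x y z w (extN x xs) (extN x ys)) (4 + 2 * n))) θs →
      conLE (cg (tupPairs (tup x y z w (extN x xs) (extN x ys))
        (rhoT A s x y z w (extN x xs) (extN x ys)) (4 + 2 * n))) φ →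
      conLE (cg (tupPairs (tup x y z w (extN x xs) (extN x ys))
        (rhoStarT A t x y z w (extN x xs) (extN x ys)) (4 + 2 * n))) φs →
      relComp φ.rel (deltaEps θ θs φ φs N).1 x y

/-! ### The Mal'cev condition for BFC: words and the terms `L_α`, `R_α` -/

/-- A word over the alphabet `{1, …, N}`. -/
def IsWord (N : ℕ) (α : List ℕ) : Prop := ∀ j ∈ α, 1 ≤ j ∧ j ≤ N

/-- The chain of identities associated with a word `α` (with `N = 2k`) and a
pair of tuples `Y` and `Ys` (which will be `ρ(X⃗), ρ*(X⃗)` or `σ(X⃗), σ*(X⃗)`). -/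
def ChainCond {S : Sig} (A : Alg S) {n : ℕ} (k : ℕ)
    (L R : List ℕ → Tm S (Fin (4 + 2 * n))) (α : List ℕ)
    (Y Ys : ℕ → A.carrier) : Prop :=
  evalAt A (L α) Y = evalAt A (L (α ++ [1])) Y ∧
  (∀ j, 1 ≤ j → j ≤ k - 1 →
    evalAt A (R (α ++ [j])) Y = evalAt A (L (α ++ [j + 1])) Y) ∧
  evalAt A (R (α ++ [k])) Y = evalAt A (R α) Y ∧
  evalAt A (L α) Ys = evalAt A (L (α ++ [k + 1])) Ys ∧
  (∀ j, k + 1 ≤ j → j ≤ 2 * k - 1 →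
    evalAt A (R (α ++ [j])) Ys = evalAt A (L (α ++ [j + 1])) Ys) ∧
  evalAt A (R (α ++ [2 * k])) Ys = evalAt A (R α) Ys

/-- `(N = 2k, n, s, t, L, R)` witness the BFC Mal'cev condition for the variety
axiomatized by `E`. -/
def MalcevWitness {S : Sig} (E : Set (Tm S ℕ × Tm S ℕ)) (k n : ℕ)
    (s t : ∀ j : Fin n, Tm S (Fin (4 + 2 * j.val)))
    (L R : List ℕ → Tm S (Fin (4 + 2 * n))) : Prop :=
  0 < k ∧ 0 < n ∧
  ∀ A : Alg S, InV E A → ∀ (x y z w : A.carrier) (xs ys : ℕ → A.carrier),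
    (∀ α : List ℕ, IsWord (2 * k) α → α.length = 2 * k →
      evalAt A (L α) (rhoT A s x y z w xs ys) =
        evalAt A (R α) (rhoT A s x y z w xs ys) ∧
      evalAt A (L α) (rhoStarT A t x y z w xs ys) =
        evalAt A (R α) (rhoStarT A t x y z w xs ys)) ∧
    (x = evalAt A (L []) (tup x y z w xs ys)) ∧
    (y = evalAt A (R []) (tup x y z w xs ys)) ∧
    (evalAt A (L []) (rhoT A s x y z w xs ys) =
      evalAt A (L [1]) (rhoT A s x y z w xs ys)) ∧
    (∀ j, 1 ≤ j → j ≤ 2 * k - 1 →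
      evalAt A (R [j]) (rhoT A s x y z w xs ys) =
        evalAt A (L [j + 1]) (rhoT A s x y z w xs ys)) ∧
    (evalAt A (R [2 * k]) (rhoT A s x y z w xs ys) =
      evalAt A (R []) (rhoT A s x y z w xs ys)) ∧
    (∀ α : List ℕ, IsWord (2 * k) α → α ≠ [] → α.length < 2 * k →
      α.length % 2 = 0 →
      ChainCond A k L R α (rhoT A s x y z w xs ys) (rhoStarT A t x y z w xs ys)) ∧
    (∀ α : List ℕ, IsWord (2 * k) α → α ≠ [] → α.length < 2 * k →
      α.length % 2 = 1 →
      ChainCond A k L R α (sigmaT A s x y z w xs ys) (sigmaStarT A t x y z w xs ys))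

/-! ### The formulas Ψ_m, Φ₁ and Φ₂ -/

/-- Alternating quantifier prefix `∃ u₁ ∀ v₁ … ∃ uₘ ∀ vₘ, P [u₁, v₁, …, uₘ, vₘ]`
(the accumulator collects the quantified elements in order). -/
def altQ {α : Type} (P : List α → Prop) : ℕ → List α → Prop
  | 0, acc => P acc
  | m + 1, acc => ∃ u : α, ∀ v : α, altQ P m (acc ++ [u, v])

/-- The (realization of the) formula `Ψ_m`: for every word `α` of length `m`,
if `L_{αγ} = R_{αγ}` for all nonempty `γ` with `|αγ| ≤ N`, then `L_α = R_α`. -/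
def Psi {S : Sig} (A : Alg S) {n : ℕ} (N : ℕ)
    (L R : List ℕ → Tm S (Fin (4 + 2 * n))) (m : ℕ) (X : ℕ → A.carrier) : Prop :=
  ∀ α : List ℕ, IsWord N α → α.length = m →
    ((∀ γ : List ℕ, IsWord N γ → γ ≠ [] → (α ++ γ).length ≤ N →
        evalAt A (L (α ++ γ)) X = evalAt A (R (α ++ γ)) X) →
      evalAt A (L α) X = evalAt A (R α) X)

/-- Realization of `Φ₁(x,y,z,w) = ∃y₁∀x₁ ⋯ ∃yₙ∀xₙ ⋀_{m=1}^{k} Ψ_{2m}`. -/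
def Phi1 {S : Sig} (A : Alg S) (k n : ℕ)
    (L R : List ℕ → Tm S (Fin (4 + 2 * n))) (x y z w : A.carrier) : Prop :=
  altQ (fun acc =>
    ∀ m, 1 ≤ m → m ≤ k →
      Psi A (2 * k) L R (2 * m)
        (tup x y z w (fun i => acc.getD (2 * i + 1) x) (fun i => acc.getD (2 * i) x)))
    n []

/-- Realization of `Φ₂(x,y,z,w) = ∃x₁∀y₁ ⋯ ∃xₙ∀yₙ ⋀_{m=1}^{k} Ψ_{2m-1}`. -/
def Phi2 {S : Sig} (A : Alg S) (k n : ℕ)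
    (L R : List ℕ → Tm S (Fin (4 + 2 * n))) (x y z w : A.carrier) : Prop :=
  altQ (fun acc =>
    ∀ m, 1 ≤ m → m ≤ k →
      Psi A (2 * k) L R (2 * m - 1)
        (tup x y z w (fun i => acc.getD (2 * i) x) (fun i => acc.getD (2 * i + 1) x)))
    n []

/-- `Γ^A(a,b,c,d)`: every factor congruence containing `(c,d)` contains `(a,b)`. -/
def Gamma {S : Sig} (A : Alg S) (a b c d : A.carrier) : Prop :=
  ∀ θ ∈ FC A, θ.rel c d → θ.rel a b


/-! ### Auxiliary lemmas for `statement5` -/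

lemma tup_even {α : Type} (x y z w : α) (xs ys : ℕ → α) (q : ℕ) :
    tup x y z w xs ys (2 * q + 4) = xs q := by
  have h : tup x y z w xs ys (2 * q + 4)
      = if (2 * q) % 2 = 0 then xs ((2 * q) / 2) else ys ((2 * q) / 2) := rfl
  rw [h]
  have h1 : (2 * q) % 2 = 0 := by omega
  have h2 : (2 * q) / 2 = q := by omega
  simp [h1, h2]

lemma tup_odd {α : Type} (x y z w : α) (xs ys : ℕ → α) (q : ℕ) :
    tup x y z w xs ys (2 * q + 5) = ys q := by
  have h : tup x y z w xs ys (2 * q + 5)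
      = if (2 * q + 1) % 2 = 0 then xs ((2 * q + 1) / 2) else ys ((2 * q + 1) / 2) := by
    have h45 : 2 * q + 5 = (2 * q + 1) + 4 := by omega
    rw [h45]
    rfl
  rw [h]
  have h1 : (2 * q + 1) % 2 = 1 := by omega
  have h2 : (2 * q + 1) / 2 = q := by omega
  simp [h1, h2]

lemma eval_congr {S : Sig} {A : Alg S} (θ : Con A) {V : Type} (u : Tm S V)
    (v w : V → A.carrier) (h : ∀ i, θ.rel (v i) (w i)) :
    θ.rel (Tm.eval A v u) (Tm.eval A w u) := by
  induction u with
  | var i => exact h i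
  | app f ts ih => exact θ.compat f _ _ fun i => ih i

lemma recRowX_stable {S : Sig} (A : Alg S) {n : ℕ}
    (u : ∀ j : Fin n, Tm S (Fin (4 + 2 * j.val)))
    (h1 h2 h3 h4 : A.carrier) (ys : ℕ → A.carrier) :
    ∀ j m, m + 1 ≤ j →
      recRowX A u h1 h2 h3 h4 ys j m = recRowX A u h1 h2 h3 h4 ys (m + 1) m := by
  intro j
  induction j with
  | zero => intro m h; omega
  | succ j ih =>
    intro m h
    rcases eq_or_lt_of_le h with heq | hlt
    · rw [heq]
    · have hne : m ≠ j := by omega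
      show (if m = j then _ else recRowX A u h1 h2 h3 h4 ys j m) = _
      rw [if_neg hne]
      exact ih m (by omega)

lemma tup_eq_of {α : Type} (x y z w : α) (xs xs' ys : ℕ → α) (b : ℕ)
    (h : ∀ q, 2 * q + 4 < b → xs q = xs' q) :
    ∀ m, m < b → tup x y z w xs ys m = tup x y z w xs' ys m := by
  intro m hm
  match m with
  | 0 => rfl
  | 1 => rfl
  | 2 => rfl
  | 3 => rfl
  | k + 4 =>
    rcases Nat.even_or_odd k with ⟨q, hq⟩ | ⟨q, hq⟩
    · subst hq
      have hq4 : q + q + 4 = 2 * q + 4 := by omega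
      rw [hq4, tup_even, tup_even]
      exact h q (by omega)
    · subst hq
      have hq5 : 2 * q + 1 + 4 = 2 * q + 5 := by omega
      rw [hq5, tup_odd, tup_odd]

lemma recRowX_eval {S : Sig} (A : Alg S) {n : ℕ}
    (u : ∀ j : Fin n, Tm S (Fin (4 + 2 * j.val)))
    (h1 h2 h3 h4 : A.carrier) (ys : ℕ → A.carrier) (q : ℕ) (hq : q < n) :
    recRowX A u h1 h2 h3 h4 ys n q =
      Tm.eval A
        (fun i : Fin (4 + 2 * q) =>
          tup h1 h2 h3 h4 (recRowX A u h1 h2 h3 h4 ys n) ys i.val)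
        (u ⟨q, hq⟩) := by
  rw [recRowX_stable A u h1 h2 h3 h4 ys n q (by omega)]
  show (if q = q then _ else _) = _
  rw [if_pos rfl, dif_pos hq]
  apply congrArg (fun v => Tm.eval A v (u ⟨q, hq⟩))
  funext i
  exact tup_eq_of h1 h2 h3 h4 _ _ ys (4 + 2 * q)
    (fun p hp => by
      rw [recRowX_stable A u h1 h2 h3 h4 ys q p (by omega),
        recRowX_stable A u h1 h2 h3 h4 ys n p (by omega)])
    i.val i.isLt

/-- Generic pointwise lemma: the σ-style tuple is θ-related, componentwise
(below `4 + 2n`), to the tuple `X`. -/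
lemma sigma_pointwise {S : Sig} (A : Alg S) (θ : Con A) {n : ℕ}
    (u : ∀ j : Fin n, Tm S (Fin (4 + 2 * j.val)))
    (h1 h2 h3 h4 : A.carrier) (ys : ℕ → A.carrier) (X : ℕ → A.carrier)
    (H0 : θ.rel h1 (X 0)) (H1 : θ.rel h2 (X 1))
    (H2 : θ.rel h3 (X 2)) (H3 : θ.rel h4 (X 3))
    (Hy : ∀ q, q < n → θ.rel (ys q) (X (2 * q + 5)))
    (Hu : ∀ j : Fin n,
      θ.rel (Tm.eval A (fun i : Fin (4 + 2 * j.val) => X i.val) (u j))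
        (X (2 * j.val + 4))) :
    ∀ m, m < 4 + 2 * n →
      θ.rel (tup h1 h2 h3 h4 (recRowX A u h1 h2 h3 h4 ys n) ys m) (X m) := by
  intro m
  induction m using Nat.strong_induction_on with
  | _ m ih =>
    intro hm
    match m, hm with
    | 0, _ => exact H0
    | 1, _ => exact H1
    | 2, _ => exact H2
    | 3, _ => exact H3
    | (k + 4), hm =>
      rcases Nat.even_or_odd k with ⟨q, hq⟩ | ⟨q, hq⟩
      · subst hq
        have hq4 : q + q + 4 = 2 * q + 4 := by omega
        rw [hq4, tup_even]
        have hqn : q < n := by omega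
        rw [recRowX_eval A u h1 h2 h3 h4 ys q hqn]
        refine θ.trans _ _ _ ?_ (Hu ⟨q, hqn⟩)
        apply eval_congr
        intro i
        exact ih i.val (by omega) (by omega)
      · subst hq
        have hq5 : 2 * q + 1 + 4 = 2 * q + 5 := by omega
        rw [hq5, tup_odd]
        exact Hy q (by omega)

/-- **Corollary (recursion for the aᵢ's).**  If `c θ a θ* b θ d` and the
`aᵢ` satisfy `sᵢ(X⃗ prefix) θ aᵢ θ* tᵢ(X⃗ prefix)`, then for every term `u` of
arity `2n+4`: `u(σ(X⃗)) θ u(X⃗)` and `u(X⃗) θ* u(σ*(X⃗))`. -/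
theorem statement5 {S : Sig} (A : Alg S) (n : ℕ) (hn : 1 ≤ n)
    (s t : ∀ j : Fin n, Tm S (Fin (4 + 2 * j.val)))
    (θ θs : Con A) (a b c d : A.carrier) (ai bi : Fin n → A.carrier)
    (hca : θ.rel c a) (hab : θs.rel a b) (hbd : θ.rel b d)
    (hrec : ∀ j : Fin n,
      θ.rel (evalAt A (s j) (tup a b c d (extN a ai) (extN a bi))) (ai j) ∧
      θs.rel (ai j) (evalAt A (t j) (tup a b c d (extN a ai) (extN a bi)))) :
    ∀ u : Tm S (Fin (2 * n + 4)),
      θ.rel (evalAt A u (sigmaT A s a b c d (extN a ai) (extN a bi)))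
        (evalAt A u (tup a b c d (extN a ai) (extN a bi))) ∧
      θs.rel (evalAt A u (tup a b c d (extN a ai) (extN a bi)))
        (evalAt A u (sigmaStarT A t a b c d (extN a ai) (extN a bi))) := by
  set X : ℕ → A.carrier := tup a b c d (extN a ai) (extN a bi) with hX
  have hXrow : ∀ j : Fin n, X (2 * j.val + 4) = ai j := by
    intro j
    rw [hX, tup_even]
    show extN a ai j.val = ai j
    simp [extN, j.isLt]
  have hP1 : ∀ m, m < 4 + 2 * n →
      θ.rel (tup a b a b (recRowX A s a b a b (extN a bi) n) (extN a bi) m) (X m) := by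
    apply sigma_pointwise A θ s a b a b (extN a bi) X
      (θ.refl a) (θ.refl b) (θ.symm _ _ hca) hbd
    · intro q hq
      rw [hX, tup_odd]
      exact θ.refl _
    · intro j
      rw [hXrow j]
      exact (hrec j).1
  have hP2 : ∀ m, m < 4 + 2 * n →
      θs.rel (tup a a c d (recRowX A t a a c d (extN a bi) n) (extN a bi) m) (X m) := by
    apply sigma_pointwise A θs t a a c d (extN a bi) X
      (θs.refl a) hab (θs.refl c) (θs.refl d)
    · intro q hq
      rw [hX, tup_odd]
      exact θs.refl _
    · intro j
      rw [hXrow j]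
      exact θs.symm _ _ (hrec j).2
  intro u
  constructor
  · exact eval_congr θ u _ _ (fun i => hP1 i.val (by omega))
  · exact θs.symm _ _ (eval_congr θs u _ _ (fun i => hP2 i.val (by omega)))

end UA
end

section
/- Let V be a variety, and let N, n and terms sᵢ, tᵢ be such that for every B ∈ V, all congruences θ, θ*, φ, φ* of B and every tuple X⃗ = (x,y,z,w,x₁,y₁,…,xₙ,yₙ) in B: if Cg(X⃗, σ(X⃗)) ⊆ θ, Cg(X⃗, σ*(X⃗)) ⊆ θ*, Cg(X⃗, ρ(X⃗)) ⊆ φ and Cg(X⃗, ρ*(X⃗)) ⊆ φ*, then (x,y) ∈ φ ∘ δ_N (such data exist whenever V has BFC). Let A = A₀ × A₁ with A₀, A₁ ∈ V. Then for all a,b ∈ A₀ and a',b',c' ∈ A₁, the following are equivalent: (i) there exists x₁ ∈ A such that for all y₁ ∈ A, …, there exists xₙ ∈ A such that for all yₙ ∈ A, Cg(X⃗, σ(X⃗)) ∩ Cg(X⃗, σ*(X⃗)) = Δ in Con(A), where X⃗ = ((a,a'),(b,b'),(a,c'),(b,c'),x₁,y₁,…,xₙ,yₙ); (ii) a' = b'.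 -/
set_option linter.unusedVariables false

namespace UA

/-! In `A₀ × A₁` the kernels of the two projections meet in `Δ`. For (ii) ⇒ (i) the `∃`-player
answers with the element whose first coordinate is the matching entry of `σ(X⃗)` and whose second
is that of `σ*(X⃗)`; these entries depend only on earlier moves of the opponent, and then
`Cg(X⃗,σ(X⃗)) ⊆ ker π₀` and `Cg(X⃗,σ*(X⃗)) ⊆ ker π₁`. For (i) ⇒ (ii) the `∀`-player plays
symmetrically from `ρ*(X⃗)` and `ρ(X⃗)`, so that `Cg(X⃗,ρ(X⃗)) ⊆ ker π₁` and
`Cg(X⃗,ρ*(X⃗)) ⊆ ker π₀`. Once both pairs of congruences meet in `Δ`, every `δ_m` is `Δ`, and the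
hypothesis yields `(x, y) ∈ Cg(X⃗,ρ(X⃗)) ⊆ ker π₁`, that is `a' = b'`. -/

section Congruences

variable {S : Sig} {A : Alg S}

theorem Con.ext {θ φ : Con A} (h : ∀ a b, θ.rel a b ↔ φ.rel a b) : θ = φ := by
  obtain ⟨r, _, _, _, _⟩ := θ
  obtain ⟨r', _, _, _, _⟩ := φ
  obtain rfl : r = r' := funext₂ fun a b => propext (h a b)
  rfl

theorem Con.eq_of_inf_eq_conDelta {θ φ : Con A} (h : θ.inf φ = conDelta A) {a b : A.carrier}
    (hθ : θ.rel a b) (hφ : φ.rel a b) : a = b := by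
  have hab : (θ.inf φ).rel a b := ⟨hθ, hφ⟩
  rwa [h] at hab

theorem Con.inf_eq_conDelta_of_le {θ φ κ κ' : Con A} (hκ : κ.inf κ' = conDelta A)
    (hθ : conLE θ κ) (hφ : conLE φ κ') : θ.inf φ = conDelta A :=
  Con.ext fun a b =>
    ⟨fun h => Con.eq_of_inf_eq_conDelta hκ (hθ a b h.1) (hφ a b h.2),
      fun h => h ▸ (θ.inf φ).refl a⟩

theorem cg_tupPairs_le {X Y : ℕ → A.carrier} {len : ℕ} {θ : Con A}
    (h : ∀ m < len, θ.rel (X m) (Y m)) : conLE (cg (tupPairs X Y len)) θ := by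
  intro a b hab
  exact hab θ (by rintro _ ⟨m, hm, rfl⟩; exact h m hm)

theorem deltaEps_eq_of_inf_eq {θ θs φ φs : Con A} (hθ : θ.inf θs = conDelta A)
    (hφ : φ.inf φs = conDelta A) (m : ℕ) :
    (∀ a b, (deltaEps θ θs φ φs m).1 a b → a = b) ∧
      (∀ a b, (deltaEps θ θs φ φs m).2 a b → a = b) := by
  induction m with
  | zero => exact ⟨fun _ _ => id, fun _ _ => id⟩
  | succ m ih =>
    constructor
    · rintro a b ⟨⟨c, hac, hcb⟩, ⟨c', hac', hc'b⟩⟩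
      obtain rfl := ih.2 _ _ hcb
      obtain rfl := ih.2 _ _ hc'b
      exact Con.eq_of_inf_eq_conDelta hθ hac hac'
    · rintro a b ⟨⟨c, hac, hcb⟩, ⟨c', hac', hc'b⟩⟩
      obtain rfl := ih.1 _ _ hcb
      obtain rfl := ih.1 _ _ hc'b
      exact Con.eq_of_inf_eq_conDelta hφ hac hac'

end Congruences

section Products

variable {S : Sig}

theorem eval_prod {A B : Alg S} {V : Type} (v : V → (A.prod B).carrier) (u : Tm S V) :
    Tm.eval (A.prod B) v u =
      (Tm.eval A (fun i => (v i).1) u, Tm.eval B (fun i => (v i).2) u) := by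
  induction u with
  | var i => rfl
  | app f ts ih =>
    exact Prod.ext
      (congrArg (A.interp f) (funext fun i => congrArg Prod.fst (ih i)))
      (congrArg (B.interp f) (funext fun i => congrArg Prod.snd (ih i)))

theorem InV.prod {E : Set (Tm S ℕ × Tm S ℕ)} {A B : Alg S} (hA : InV E A) (hB : InV E B) :
    InV E (A.prod B) := by
  intro e he v
  rw [eval_prod v e.1, eval_prod v e.2, hA e he, hB e he]

def kerFst (A B : Alg S) : Con (A.prod B) where
  rel u v := u.1 = v.1
  refl _ := rfl
  symm _ _ h := h.symm
  trans _ _ _ h₁ h₂ := h₁.trans h₂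
  compat f _ _ h := congrArg (A.interp f) (funext h)

def kerSnd (A B : Alg S) : Con (A.prod B) where
  rel u v := u.2 = v.2
  refl _ := rfl
  symm _ _ h := h.symm
  trans _ _ _ h₁ h₂ := h₁.trans h₂
  compat f _ _ h := congrArg (B.interp f) (funext h)

theorem kerFst_inf_kerSnd (A B : Alg S) : (kerFst A B).inf (kerSnd A B) = conDelta (A.prod B) :=
  Con.ext fun _ _ => ⟨fun h => Prod.ext h.1 h.2, fun h => h ▸ ⟨rfl, rfl⟩⟩

theorem kerSnd_inf_kerFst (A B : Alg S) : (kerSnd A B).inf (kerFst A B) = conDelta (A.prod B) :=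
  Con.ext fun _ _ => ⟨fun h => Prod.ext h.2 h.1, fun h => h ▸ ⟨rfl, rfl⟩⟩

end Products

section Tuples

theorem tup_rel {α : Type} {r : α → α → Prop} {x y z w x' y' z' w' : α} {xs ys xs' ys' : ℕ → α}
    {n : ℕ} (hx : r x x') (hy : r y y') (hz : r z z') (hw : r w w')
    (hxs : ∀ i < n, r (xs i) (xs' i)) (hys : ∀ i < n, r (ys i) (ys' i)) :
    ∀ m < 4 + 2 * n, r (tup x y z w xs ys m) (tup x' y' z' w' xs' ys' m)
  | 0, _ => hx
  | 1, _ => hy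
  | 2, _ => hz
  | 3, _ => hw
  | m + 4, hm => by
    simp only [tup]
    split_ifs
    · exact hxs _ (by omega)
    · exact hys _ (by omega)

theorem extN_eq {α : Type} {n : ℕ} {d : α} {f : ℕ → α} (hf : ∀ m, n ≤ m → f m = d) :
    extN d (fun i : Fin n => f i) = f := by
  funext m
  unfold extN
  split_ifs with h
  · rfl
  · exact (hf m (by omega)).symm

variable {S : Sig} {A : Alg S} {n : ℕ} {u : ∀ j : Fin n, Tm S (Fin (4 + 2 * j.val))}
  {h1 h2 h3 h4 : A.carrier}

theorem recRowX_congr {ys ys' : ℕ → A.carrier} {j m : ℕ} (h : ∀ i < m, ys i = ys' i) :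
    recRowX A u h1 h2 h3 h4 ys j m = recRowX A u h1 h2 h3 h4 ys' j m := by
  induction j generalizing m with
  | zero => rfl
  | succ j ih =>
    simp only [recRowX]
    split_ifs with hmj hj
    · subst hmj
      congr 1
      funext i
      exact tup_rel rfl rfl rfl rfl (fun i hi => ih fun i' hi' => h i' (by omega)) h i.val i.isLt
    · rfl
    · exact ih h

theorem recRowY_congr {xs xs' : ℕ → A.carrier} {j m : ℕ} (h : ∀ i < m, xs i = xs' i) :
    recRowY A u h1 h2 h3 h4 xs j m = recRowY A u h1 h2 h3 h4 xs' j m := by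
  induction j generalizing m with
  | zero => rfl
  | succ j ih =>
    simp only [recRowY]
    split_ifs with hmj hj
    · subst hmj
      congr 1
      funext i
      exact tup_rel rfl rfl rfl rfl h (fun i hi => ih fun i' hi' => h i' (by omega)) i.val i.isLt
    · rfl
    · exact ih h

end Tuples

section Games

variable {α : Type}

/-- A play `l = [x₁, y₁, x₂, y₂, …]`; moves beyond the end of `l` default to `d`. -/
def xMoves (l : List α) (d : α) (i : ℕ) : α := l.getD (2 * i) d

def yMoves (l : List α) (d : α) (i : ℕ) : α := l.getD (2 * i + 1) d

theorem xMoves_take {l : List α} {d : α} {i j : ℕ} (h : 2 * i < j) :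
    xMoves (l.take j) d i = xMoves l d i := by
  simp [xMoves, List.getD_eq_getElem?_getD, h]

theorem yMoves_take {l : List α} {d : α} {i j : ℕ} (h : 2 * i + 1 < j) :
    yMoves (l.take j) d i = yMoves l d i := by
  simp [yMoves, List.getD_eq_getElem?_getD, h]

def Follows (f : List α → α) (r : ℕ) (acc l : List α) : Prop :=
  ∀ i (hi : i < l.length), i % 2 = r → l[i] = f (acc ++ l.take i)

theorem Follows.cons_cons {f : List α → α} {r : ℕ} {acc l : List α} {u v : α}
    (hu : r = 0 → u = f acc) (hv : r = 1 → v = f (acc ++ [u]))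
    (hl : Follows f r (acc ++ [u, v]) l) : Follows f r acc (u :: v :: l)
  | 0, _, h => by simpa using hu h.symm
  | 1, _, h => by simpa using hv h.symm
  | i + 2, hi, h => by
    simpa using hl i (by simpa using hi) (by omega)

theorem altQ_of_follows (f : List α → α) {P : List α → Prop} :
    ∀ m acc, (∀ l, l.length = 2 * m → Follows f 0 acc l → P (acc ++ l)) → altQ P m acc
  | 0, acc, h => by
    show P acc
    simpa using h [] rfl fun i hi => absurd hi (Nat.not_lt_zero i)
  | m + 1, acc, h => ⟨f acc, fun v => altQ_of_follows f m _ fun l hl hfl => by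
      simpa using h (f acc :: v :: l) (by simp [hl]; omega)
        (Follows.cons_cons (fun _ => rfl) (by simp) hfl)⟩

theorem exists_follows_of_altQ (f : List α → α) {P : List α → Prop} :
    ∀ m acc, altQ P m acc → ∃ l, l.length = 2 * m ∧ Follows f 1 acc l ∧ P (acc ++ l)
  | 0, acc, h =>
    ⟨[], rfl, fun i hi => absurd hi (Nat.not_lt_zero i), (List.append_nil acc).symm ▸ h⟩
  | m + 1, acc, ⟨u, hu⟩ => by
    obtain ⟨l, hl, hfl, hP⟩ := exists_follows_of_altQ f m _ (hu (f (acc ++ [u])))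
    exact ⟨u :: f (acc ++ [u]) :: l, by simp [hl]; omega,
      Follows.cons_cons (by simp) (fun _ => rfl) hfl, by simpa using hP⟩

def Nonanticipating (F : (ℕ → α) → ℕ → α) : Prop :=
  ∀ ⦃xs xs' : ℕ → α⦄ ⦃k : ℕ⦄, (∀ i < k, xs i = xs' i) → F xs k = F xs' k

theorem altQ_of_nonanticipating {F : (ℕ → α) → ℕ → α} (hF : Nonanticipating F) (d : α)
    {P : List α → Prop} {m : ℕ}
    (h : ∀ l : List α, l.length = 2 * m → (∀ k < m, xMoves l d k = F (yMoves l d) k) → P l) :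
    altQ P m [] := by
  refine altQ_of_follows (fun l => F (yMoves l d) (l.length / 2)) m []
    fun l hl hfl => h l hl fun k hk => ?_
  have hlt : 2 * k < l.length := by omega
  have hmove := hfl (2 * k) hlt (by omega)
  simp only [List.nil_append, List.length_take, min_eq_left hlt.le,
    Nat.mul_div_cancel_left k two_pos] at hmove
  rw [xMoves, List.getD_eq_getElem _ _ hlt, hmove]
  exact hF fun i hi => yMoves_take (by omega)

theorem exists_of_altQ_nonanticipating {F : (ℕ → α) → ℕ → α} (hF : Nonanticipating F) (d : α)
    {P : List α → Prop} {m : ℕ} (h : altQ P m []) :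
    ∃ l : List α, l.length = 2 * m ∧ (∀ k < m, yMoves l d k = F (xMoves l d) k) ∧ P l := by
  obtain ⟨l, hl, hfl, hP⟩ :=
    exists_follows_of_altQ (fun l => F (xMoves l d) (l.length / 2)) m [] h
  refine ⟨l, hl, fun k hk => ?_, hP⟩
  have hlt : 2 * k + 1 < l.length := by omega
  have hmove := hfl (2 * k + 1) hlt (by omega)
  simp only [List.nil_append, List.length_take, min_eq_left hlt.le] at hmove
  rw [yMoves, List.getD_eq_getElem _ _ hlt, hmove, show (2 * k + 1) / 2 = k by omega]
  exact hF fun i hi => xMoves_take (by omega)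

end Games

section Definability

variable {S : Sig} {n : ℕ} {s t : ∀ j : Fin n, Tm S (Fin (4 + 2 * j.val))}

def CgSigmaMeetTrivial (A : Alg S) (s t : ∀ j : Fin n, Tm S (Fin (4 + 2 * j.val)))
    (x y z w : A.carrier) (l : List A.carrier) : Prop :=
  (cg (tupPairs (tup x y z w (xMoves l x) (yMoves l x))
      (sigmaT A s x y z w (xMoves l x) (yMoves l x)) (4 + 2 * n))).inf
    (cg (tupPairs (tup x y z w (xMoves l x) (yMoves l x))
      (sigmaStarT A t x y z w (xMoves l x) (yMoves l x)) (4 + 2 * n))) =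
  conDelta A

theorem MalcevRelCondition.relComp_of_le {E : Set (Tm S ℕ × Tm S ℕ)} {N : ℕ}
    (hW : MalcevRelCondition E N n s t) {A : Alg S} (hA : InV E A) {θ θs φ φs : Con A}
    {x y z w : A.carrier} {xs ys : ℕ → A.carrier}
    (hxs : ∀ m, n ≤ m → xs m = x) (hys : ∀ m, n ≤ m → ys m = x)
    (hθ : conLE (cg (tupPairs (tup x y z w xs ys) (sigmaT A s x y z w xs ys) (4 + 2 * n))) θ)
    (hθs : conLE (cg (tupPairs (tup x y z w xs ys) (sigmaStarT A t x y z w xs ys) (4 + 2 * n))) θs)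
    (hφ : conLE (cg (tupPairs (tup x y z w xs ys) (rhoT A s x y z w xs ys) (4 + 2 * n))) φ)
    (hφs : conLE (cg (tupPairs (tup x y z w xs ys) (rhoStarT A t x y z w xs ys) (4 + 2 * n))) φs) :
    relComp φ.rel (deltaEps θ θs φ φs N).1 x y := by
  have h := hW A hA θ θs φ φs x y z w (fun i => xs i) (fun i => ys i)
  rw [extN_eq hxs, extN_eq hys] at h
  exact h hθ hθs hφ hφs

variable {A0 A1 : Alg S} {x y z w : (A0.prod A1).carrier}

theorem altQ_cgSigmaMeetTrivial (hz : z.1 = x.1) (hw : w.1 = y.1) (hxy : x.2 = y.2) :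
    altQ (CgSigmaMeetTrivial (A0.prod A1) s t x y z w) n [] := by
  refine altQ_of_nonanticipating (α := (A0.prod A1).carrier)
    (F := fun ys k => ((recRowX _ s x y x y ys n k).1, (recRowX _ t x x z w ys n k).2))
    (fun _ _ _ h => congrArg₂ (fun u v : (A0.prod A1).carrier => (u.1, v.2))
      (recRowX_congr h) (recRowX_congr h)) x fun l _ hl => ?_
  refine Con.inf_eq_conDelta_of_le (kerFst_inf_kerSnd A0 A1) ?_ ?_
  · exact cg_tupPairs_le
      (tup_rel (r := (kerFst A0 A1).rel) rfl rfl hz hw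
        (fun k hk => (congrArg Prod.fst (hl k hk) :)) fun _ _ => rfl)
  · exact cg_tupPairs_le
      (tup_rel (r := (kerSnd A0 A1).rel) rfl hxy.symm rfl rfl
        (fun k hk => (congrArg Prod.snd (hl k hk) :)) fun _ _ => rfl)

theorem snd_eq_of_altQ_cgSigmaMeetTrivial {E : Set (Tm S ℕ × Tm S ℕ)} {N : ℕ}
    (hW : MalcevRelCondition E N n s t) (h0 : InV E A0) (h1 : InV E A1) (hw : w.2 = z.2)
    (h : altQ (CgSigmaMeetTrivial (A0.prod A1) s t x y z w) n []) : x.2 = y.2 := by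
  obtain ⟨l, hlen, hl, hmeet⟩ := exists_of_altQ_nonanticipating (α := (A0.prod A1).carrier)
    (F := fun xs k => ((recRowY _ t x y z w xs n k).1, (recRowY _ s x y z z xs n k).2))
    (fun _ _ _ h => congrArg₂ (fun u v : (A0.prod A1).carrier => (u.1, v.2))
      (recRowY_congr h) (recRowY_congr h)) x h
  have hφ : conLE (cg (tupPairs (tup x y z w (xMoves l x) (yMoves l x))
      (rhoT _ s x y z w (xMoves l x) (yMoves l x)) (4 + 2 * n))) (kerSnd A0 A1) :=
    cg_tupPairs_le
      (tup_rel (r := (kerSnd A0 A1).rel) rfl rfl rfl hw (fun _ _ => rfl)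
        fun k hk => (congrArg Prod.snd (hl k hk) :))
  have hφs : conLE (cg (tupPairs (tup x y z w (xMoves l x) (yMoves l x))
      (rhoStarT _ t x y z w (xMoves l x) (yMoves l x)) (4 + 2 * n))) (kerFst A0 A1) :=
    cg_tupPairs_le
      (tup_rel (r := (kerFst A0 A1).rel) rfl rfl rfl rfl (fun _ _ => rfl)
        fun k hk => (congrArg Prod.fst (hl k hk) :))
  obtain ⟨c, hxc, hcy⟩ := hW.relComp_of_le (h0.prod h1) (xs := xMoves l x) (ys := yMoves l x)
    (fun m hm => List.getD_eq_default _ _ (by omega))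
    (fun m hm => List.getD_eq_default _ _ (by omega))
    (fun _ _ => id) (fun _ _ => id) (fun _ _ => id) (fun _ _ => id)
  have hδ := (deltaEps_eq_of_inf_eq hmeet
    (Con.inf_eq_conDelta_of_le (kerSnd_inf_kerFst A0 A1) hφ hφs) N).1 c y hcy
  exact hφ _ _ (hδ ▸ hxc)

end Definability

/-- **Corollary (infinitary definability).**  Suppose `N, n, s, t` satisfy
Willard's congruence condition on the variety (such data exist whenever the
variety has BFC).  Let `A = A₀ × A₁` with `A₀, A₁` in the variety.  Then for
`a, b ∈ A₀` and `a', b', c' ∈ A₁`: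
`∃x₁∀y₁ … ∃xₙ∀yₙ, Cg(X⃗,σ(X⃗)) ∩ Cg(X⃗,σ*(X⃗)) = Δ` (with
`X⃗ = ((a,a'),(b,b'),(a,c'),(b,c'),x₁,y₁,…,xₙ,yₙ)`) iff `a' = b'`. -/
theorem statement9 {S : Sig} (E : Set (Tm S ℕ × Tm S ℕ)) (N n : ℕ)
    (s t : ∀ j : Fin n, Tm S (Fin (4 + 2 * j.val)))
    (hW : MalcevRelCondition E N n s t)
    (A0 A1 : Alg S) (h0 : InV E A0) (h1 : InV E A1)
    (a b : A0.carrier) (a' b' c' : A1.carrier) :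
    altQ (fun acc : List (Alg.prod A0 A1).carrier =>
      Con.inf
        (cg (tupPairs
          (tup ((a, a') : (Alg.prod A0 A1).carrier) (b, b') (a, c') (b, c')
            (fun i => acc.getD (2 * i) (a, a')) (fun i => acc.getD (2 * i + 1) (a, a')))
          (sigmaT (Alg.prod A0 A1) s (a, a') (b, b') (a, c') (b, c')
            (fun i => acc.getD (2 * i) (a, a')) (fun i => acc.getD (2 * i + 1) (a, a')))
          (4 + 2 * n)))
        (cg (tupPairs
          (tup ((a, a') : (Alg.prod A0 A1).carrier) (b, b') (a, c') (b, c')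
            (fun i => acc.getD (2 * i) (a, a')) (fun i => acc.getD (2 * i + 1) (a, a')))
          (sigmaStarT (Alg.prod A0 A1) t (a, a') (b, b') (a, c') (b, c')
            (fun i => acc.getD (2 * i) (a, a')) (fun i => acc.getD (2 * i + 1) (a, a')))
          (4 + 2 * n))) =
      conDelta (Alg.prod A0 A1)) n [] ↔
    a' = b' :=
  ⟨snd_eq_of_altQ_cgSigmaMeetTrivial hW h0 h1 rfl,
    altQ_cgSigmaMeetTrivial (x := (a, a')) (y := (b, b')) (z := (a, c')) (w := (b, c')) rfl rfl⟩

end UA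
end
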